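/- arXiv:0902.0488 — 5 statements merged into one kernel-verified Lean document; each statement's English description precedes it below -/
import Mathlib

section
/- Let β be an arbitrary real number in (1, (1+√5)/2). Then there exists κ = κ(β) > 0, depending only on β, such that for every integer m ≥ 2 and every x ∈ (0, (m−1)/(β−1)) one has liminf_{n→∞} (1/n)·log₂ 𝒩_n(x;β) ≥ κ. -/
/-!
Fix `1 < b < 1 / (β(β-1))`, possible exactly because `β < φ`. On the core interval `[b/β, b]`
both digits `0` and `1` are admissible, and from either image the orbit returns to the core within
`K` steps, `K` depending on `β` and `b` only: the digit `1` lowers points above `b` by at least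
`1 - β(β-1)b`, and then the digit `0` pushes the point back above `b/β`. So the admissible words
from a core point contain a binary tree branching every `K + 1` levels, giving at least
`2^(n/(K+1))` of length `n`. Every `x ∈ (0, (m-1)/(β-1))` reaches the core after finitely many
admissible digits, and the greedy algorithm extends every admissible word to a β-expansion.
-/

open MeasureTheory Filter Set

/-- Number of length-`n` prefixes of β-expansions of `x` with digits in `{0,…,m-1}`. -/
noncomputable def Nn (β : ℝ) (m n : ℕ) (x : ℝ) : ℕ :=
  Nat.card {w : Fin n → Fin m // ∃ ε : ℕ → Fin m,
    (∀ k : Fin n, ε k = w k) ∧ x = ∑' k : ℕ, ((ε k : ℕ) : ℝ) / β ^ (k + 1)}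

/-- β is a Pisot number. -/
def IsPisot (β : ℝ) : Prop :=
  1 < β ∧ ∃ p : Polynomial ℤ, p.Monic ∧ Polynomial.aeval β p = 0 ∧
    ∀ z : ℂ, Polynomial.aeval z p = 0 → z ≠ (β : ℂ) → ‖z‖ < 1

/-- μ_{β,m}: pushforward of the infinite product of uniform measures on `{0,…,m-1}`
under `(ε_k) ↦ Σ ε_k β^{-(k+1)}`, realized via the base-`m` digit sequence of a
Lebesgue-random point of `[0,1)`. -/
noncomputable def mu (β : ℝ) (m : ℕ) : Measure ℝ :=
  Measure.map
    (fun x : ℝ => ∑' k : ℕ, ((⌊x * (m : ℝ) ^ (k + 1)⌋.toNat % m : ℕ) : ℝ) / β ^ (k + 1))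
    (volume.restrict (Ico 0 1))

open Topology

namespace BetaExpansion

variable {m : ℕ} {β L : ℝ}

@[simp] def remainder (β : ℝ) : List (Fin m) → ℝ → ℝ
  | [], x => x
  | d :: s, x => remainder β s (β * x - (d : ℕ))

/-- For `L = (m-1)/(β-1)` and `β ≤ m`, the words admissible from `x ∈ [0, L]` are exactly the
prefixes of β-expansions of `x`. -/
@[simp] def Admissible (β L : ℝ) : List (Fin m) → ℝ → Prop
  | [], _ => True
  | d :: s, x => β * x - (d : ℕ) ∈ Icc 0 L ∧ Admissible β L s (β * x - (d : ℕ))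

theorem remainder_append (s t : List (Fin m)) (x : ℝ) :
    remainder β (s ++ t) x = remainder β t (remainder β s x) := by
  induction s generalizing x with
  | nil => rfl
  | cons d s ih => exact ih _

theorem admissible_append {s t : List (Fin m)} {x : ℝ} :
    Admissible β L (s ++ t) x ↔ Admissible β L s x ∧ Admissible β L t (remainder β s x) := by
  induction s generalizing x with
  | nil => simp
  | cons d s ih => simp [ih, and_assoc]

theorem Admissible.remainder_mem {s : List (Fin m)} {x : ℝ} (hs : Admissible β L s x)
    (hx : x ∈ Icc 0 L) : remainder β s x ∈ Icc 0 L := by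
  induction s generalizing x with
  | nil => exact hx
  | cons d s ih => exact ih hs.2 hs.1

noncomputable def digitValue (β : ℝ) (ε : Stream' (Fin m)) : ℝ :=
  ∑' k, ((ε.get k : ℕ) : ℝ) / β ^ (k + 1)

theorem summable_digit_div_pow (hβ : 1 < β) (ε : ℕ → Fin m) :
    Summable fun k => ((ε k : ℕ) : ℝ) / β ^ (k + 1) := by
  have hβ0 : 0 < β := by linarith
  refine .of_nonneg_of_le (fun k => by positivity) (fun k => ?_)
    ((summable_geometric_of_lt_one (inv_nonneg.2 hβ0.le)
      (inv_lt_one_of_one_lt₀ hβ)).mul_left (m : ℝ))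
  calc ((ε k : ℕ) : ℝ) / β ^ (k + 1) ≤ m / β ^ k := by
        gcongr
        · exact_mod_cast (ε k).isLt.le
        · exact hβ.le
        · omega
    _ = m * β⁻¹ ^ k := by rw [inv_pow, div_eq_mul_inv]

theorem digitValue_cons (hβ : 1 < β) (d : Fin m) (ε : Stream' (Fin m)) :
    digitValue β (Stream'.cons d ε) = ((d : ℕ) + digitValue β ε) / β := by
  unfold digitValue
  rw [(summable_digit_div_pow hβ _).tsum_eq_zero_add, add_div, ← tsum_div_const]
  congr 1
  · simp [Stream'.get_zero_cons]
  · refine tsum_congr fun k => ?_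
    simp [Stream'.get_succ_cons, pow_succ, div_div]

theorem digitValue_append_stream (hβ : 1 < β) (s : List (Fin m)) {x : ℝ} {ε : Stream' (Fin m)}
    (h : remainder β s x = digitValue β ε) : digitValue β (s ++ₛ ε) = x := by
  induction s generalizing x with
  | nil => exact h.symm
  | cons d s ih =>
    rw [Stream'.cons_append_stream, digitValue_cons hβ, ih h]
    field_simp
    ring

noncomputable def greedyDigit (β : ℝ) (m : ℕ) (y : ℝ) : ℕ := min (m - 1) ⌊β * y⌋₊

theorem greedyDigit_lt (hm : 0 < m) (β y : ℝ) : greedyDigit β m y < m := by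
  unfold greedyDigit
  omega

theorem sub_greedyDigit_mem_Icc (hβ : 1 < β) (hβm : β ≤ m) (hL : (β - 1) * L = m - 1)
    {y : ℝ} (hy : y ∈ Icc 0 L) : β * y - greedyDigit β m y ∈ Icc 0 L := by
  have hL1 : 1 ≤ L := by nlinarith
  have hβy : 0 ≤ β * y := by nlinarith [hy.1]
  rcases le_total ⌊β * y⌋₊ (m - 1) with h | h
  · rw [greedyDigit, min_eq_right h]
    exact ⟨by linarith [Nat.floor_le hβy], by linarith [Nat.lt_floor_add_one (β * y)]⟩
  · have hm : 0 < m := by exact_mod_cast (by linarith : (0 : ℝ) < m)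
    have hfloor : (m : ℝ) - 1 ≤ ⌊β * y⌋₊ := by rw [← Nat.cast_pred hm]; exact_mod_cast h
    rw [greedyDigit, min_eq_left h, Nat.cast_pred hm]
    exact ⟨by linarith [Nat.floor_le hβy], by nlinarith [hy.2]⟩

theorem exists_admissible_length_eq (hβ : 1 < β) (hβm : β ≤ m) (hL : (β - 1) * L = m - 1)
    (n : ℕ) {y : ℝ} (hy : y ∈ Icc 0 L) : ∃ s : List (Fin m), s.length = n ∧ Admissible β L s y := by
  have hm : 0 < m := by exact_mod_cast (by linarith : (0 : ℝ) < m)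
  induction n generalizing y with
  | zero => exact ⟨[], rfl, trivial⟩
  | succ n ih =>
    have hstep := sub_greedyDigit_mem_Icc hβ hβm hL hy
    obtain ⟨s, hs, hadm⟩ := ih hstep
    exact ⟨⟨greedyDigit β m y, greedyDigit_lt hm β y⟩ :: s, by simp [hs], hstep, hadm⟩

theorem exists_digitValue_eq (hβ : 1 < β) (hβm : β ≤ m) (hL : (β - 1) * L = m - 1)
    {y : ℝ} (hy : y ∈ Icc 0 L) : ∃ ε : Stream' (Fin m), digitValue β ε = y := by
  have hm : 0 < m := by exact_mod_cast (by linarith : (0 : ℝ) < m)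
  have hβ0 : 0 < β := by linarith
  set orbit : ℕ → ℝ := fun k => (fun z => β * z - greedyDigit β m z)^[k] y with horbit_def
  have horbit : ∀ k, orbit k ∈ Icc 0 L := fun k => by
    induction k with
    | zero => exact hy
    | succ k ih =>
      simpa only [horbit_def, Function.iterate_succ_apply'] using
        sub_greedyDigit_mem_Icc hβ hβm hL ih
  refine ⟨fun k => ⟨greedyDigit β m (orbit k), greedyDigit_lt hm β _⟩, ?_⟩
  have hpartial : ∀ n, ∑ k ∈ Finset.range n, (greedyDigit β m (orbit k) : ℝ) / β ^ (k + 1)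
      = y - orbit n / β ^ n := fun n => by
    induction n with
    | zero => simp [horbit_def]
    | succ n ih =>
      rw [Finset.sum_range_succ, ih]
      simp only [horbit_def, Function.iterate_succ_apply']
      field_simp
      ring
  have hlim : Tendsto (fun n => orbit n / β ^ n) atTop (𝓝 0) := by
    refine squeeze_zero (fun n => div_nonneg (horbit n).1 (by positivity)) (fun n => ?_)
      (by simpa using (tendsto_pow_atTop_nhds_zero_of_lt_one (inv_nonneg.2 hβ0.le)
        (inv_lt_one_of_one_lt₀ hβ)).const_mul L)
    rw [← div_eq_mul_inv]
    gcongr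
    exact (horbit n).2
  refine ((summable_digit_div_pow hβ _).hasSum_iff_tendsto_nat.2 ?_).tsum_eq
  simp only [Stream'.get, hpartial]
  simpa using tendsto_const_nhds.sub hlim

noncomputable def admissibleCount (β L : ℝ) (m n : ℕ) (x : ℝ) : ℕ :=
  Nat.card {v : List.Vector (Fin m) n // Admissible β L v.toList x}

theorem one_le_admissibleCount (hβ : 1 < β) (hβm : β ≤ m) (hL : (β - 1) * L = m - 1)
    (n : ℕ) {x : ℝ} (hx : x ∈ Icc 0 L) : 1 ≤ admissibleCount β L m n x := by
  obtain ⟨s, hs, hadm⟩ := exists_admissible_length_eq hβ hβm hL n hx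
  have : Nonempty {v : List.Vector (Fin m) n // Admissible β L v.toList x} := ⟨⟨⟨s, hs⟩, hadm⟩⟩
  exact Nat.card_pos

theorem admissibleCount_remainder_le {s : List (Fin m)} {x : ℝ} (hs : Admissible β L s x)
    {k n : ℕ} (hn : s.length + k = n) :
    admissibleCount β L m k (remainder β s x) ≤ admissibleCount β L m n x := by
  unfold admissibleCount
  refine Nat.card_le_card_of_injective
    (fun v => ⟨⟨s ++ v.1.toList, by simp [hn]⟩, admissible_append.2 ⟨hs, v.2⟩⟩) fun v w h => ?_
  have := List.append_cancel_left (congrArg (fun u => u.1.toList) h)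
  exact Subtype.ext (List.Vector.toList_injective this)

theorem admissibleCount_add_le_succ {d₀ d₁ : Fin m} (hd : d₀ ≠ d₁) {x : ℝ}
    (h₀ : β * x - (d₀ : ℕ) ∈ Icc 0 L) (h₁ : β * x - (d₁ : ℕ) ∈ Icc 0 L) (n : ℕ) :
    admissibleCount β L m n (β * x - (d₀ : ℕ)) + admissibleCount β L m n (β * x - (d₁ : ℕ))
      ≤ admissibleCount β L m (n + 1) x := by
  rw [admissibleCount, admissibleCount, ← Nat.card_sum]
  refine Nat.card_le_card_of_injective
    (Sum.elim (fun v => ⟨d₀ ::ᵥ v.1, by rw [List.Vector.toList_cons]; exact ⟨h₀, v.2⟩⟩)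
      (fun v => ⟨d₁ ::ᵥ v.1, by rw [List.Vector.toList_cons]; exact ⟨h₁, v.2⟩⟩)) ?_
  rintro (v | v) (w | w) h <;>
    have h' := congrArg (fun u => u.1.toList) h <;>
    simp only [Sum.elim_inl, Sum.elim_inr, List.Vector.toList_cons, List.cons.injEq] at h'
  · exact congrArg Sum.inl (Subtype.ext (List.Vector.toList_injective h'.2))
  · exact absurd h'.1 hd
  · exact absurd h'.1.symm hd
  · exact congrArg Sum.inr (Subtype.ext (List.Vector.toList_injective h'.2))

theorem admissibleCount_le_Nn (hβ : 1 < β) (hβm : β ≤ m) (hL : (β - 1) * L = m - 1)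
    {x : ℝ} (hx : x ∈ Icc 0 L) (n : ℕ) : admissibleCount β L m n x ≤ Nn β m n x := by
  unfold admissibleCount
  refine Nat.card_le_card_of_injective (fun v => ⟨v.1.get, ?_⟩) fun v w h => ?_
  · obtain ⟨ε, hε⟩ := exists_digitValue_eq hβ hβm hL (v.2.remainder_mem hx)
    refine ⟨(v.1.toList ++ₛ ε).get, fun k => ?_, (digitValue_append_stream hβ _ hε.symm).symm⟩
    rw [List.Vector.get_eq_get_toList]
    exact Stream'.get_append_left _ _ _ (by simp)
  · exact Subtype.ext (List.Vector.ext fun i => congrFun (congrArg Subtype.val h) i)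

theorem Nn_le_pow (β : ℝ) (m n : ℕ) (x : ℝ) : Nn β m n x ≤ m ^ n :=
  (Finite.card_subtype_le _).trans_eq (by simp)

def ReachesWithin (β L : ℝ) (m K : ℕ) (S : Set ℝ) (y : ℝ) : Prop :=
  ∃ s : List (Fin m), s.length ≤ K ∧ Admissible β L s y ∧ remainder β s y ∈ S

namespace ReachesWithin

variable {K K' : ℕ} {S : Set ℝ} {y : ℝ}

theorem of_mem (hy : y ∈ S) : ReachesWithin β L m K S y :=
  ⟨[], K.zero_le, trivial, hy⟩

theorem mono (h : ReachesWithin β L m K S y) (hK : K ≤ K') : ReachesWithin β L m K' S y :=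
  let ⟨s, hs, hadm, hrem⟩ := h
  ⟨s, hs.trans hK, hadm, hrem⟩

theorem cons {y' : ℝ} (d : Fin m) (hd : β * y - (d : ℕ) = y') (hy' : y' ∈ Icc 0 L)
    (h : ReachesWithin β L m K S y') : ReachesWithin β L m (K + 1) S y := by
  subst hd
  obtain ⟨s, hs, hadm, hrem⟩ := h
  exact ⟨d :: s, by simpa using hs, ⟨hy', hadm⟩, hrem⟩

end ReachesWithin

section CoreInterval

variable {b : ℝ}

/-- Applying the digit `0` until the point exceeds `b / β` lands in `[b/β, b]`. -/
theorem reachesWithin_Icc_of_le_pow_mul (hβ : 1 < β) (hm : 0 < m) (hbL : b ≤ L) (j : ℕ) :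
    ∀ y, 0 ≤ y → y ≤ b → b / β ≤ β ^ j * y → ReachesWithin β L m j (Icc (b / β) b) y := by
  induction j with
  | zero => exact fun y _ hyb hy => .of_mem ⟨by simpa using hy, hyb⟩
  | succ j ih =>
    intro y hy0 hyb hy
    by_cases hya : b / β ≤ y
    · exact .of_mem ⟨hya, hyb⟩
    have hβy : β * y ≤ b := by
      rw [not_le, lt_div_iff₀ (by linarith)] at hya
      linarith
    have hβy0 : 0 ≤ β * y := mul_nonneg (by linarith) hy0
    refine .cons ⟨0, hm⟩ (by simp) ⟨hβy0, hβy.trans hbL⟩ (ih _ hβy0 hβy ?_)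
    rwa [← mul_assoc, ← pow_succ]

/-- While the point is above `b`, the digit `1` lowers it by at least `1 - β(β-1)b`. -/
theorem reachesWithin_Icc_of_le_add_mul (hβ : 1 < β) (hm : 1 < m) (hb1 : 1 ≤ b)
    (hb : β * (β - 1) * b ≤ 1) (hbL : β * b ≤ L) {K : ℕ}
    (hK : ∀ y ∈ Icc (b - 1) b, ReachesWithin β L m K (Icc (b / β) b) y) (j : ℕ) :
    ∀ y ∈ Icc (b - 1) (β * b), y ≤ b + j * (1 - β * (β - 1) * b) →
      ReachesWithin β L m (j + K) (Icc (b / β) b) y := by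
  induction j with
  | zero => exact fun y hy hyb => (hK y ⟨hy.1, by simpa using hyb⟩).mono (by omega)
  | succ j ih =>
    intro y hy hyb
    by_cases hyb' : y ≤ b
    · exact (hK y ⟨hy.1, hyb'⟩).mono (by omega)
    have hdrop : β * y - 1 ≤ y - (1 - β * (β - 1) * b) := by nlinarith [hy.2]
    have hmem : β * y - 1 ∈ Icc (b - 1) (β * b) :=
      ⟨by nlinarith, by nlinarith [hy.2]⟩
    refine (ReachesWithin.cons ⟨1, hm⟩ (by simp) ⟨by linarith [hmem.1], hmem.2.trans hbL⟩
      (ih _ hmem ?_)).mono (by omega)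
    push_cast at hyb
    linarith

theorem reachesWithin_Icc (hβ : 1 < β) (hm : 1 < m) (hb1 : 1 < b) (hb : β * (β - 1) * b ≤ 1)
    (hbL : β * b ≤ L) {J K : ℕ} (hK : b / β ≤ β ^ K * (b - 1))
    (hJ : β * b ≤ b + J * (1 - β * (β - 1) * b)) {y : ℝ} (hy : y ∈ Icc (b - 1) (β * b)) :
    ReachesWithin β L m (J + K) (Icc (b / β) b) y := by
  refine reachesWithin_Icc_of_le_add_mul hβ hm hb1.le hb hbL (fun z hz => ?_) J y hy
    (hy.2.trans hJ)
  refine reachesWithin_Icc_of_le_pow_mul hβ (by omega) (by nlinarith) K z (by linarith [hz.1])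
    hz.2 (hK.trans ?_)
  gcongr
  exact hz.1

/-- The admissible words from a point of `S` contain a binary tree branching at least every
`K + 1` levels. -/
theorem two_pow_div_le_admissibleCount (hβ : 1 < β) (hβm : β ≤ m) (hL : (β - 1) * L = m - 1)
    {S : Set ℝ} (hS : S ⊆ Icc 0 L) {K : ℕ}
    (hbranch : ∀ x ∈ S, ∃ d₀ d₁ : Fin m, d₀ ≠ d₁ ∧ ∀ d ∈ [d₀, d₁],
      β * x - (d : ℕ) ∈ Icc 0 L ∧ ReachesWithin β L m K S (β * x - (d : ℕ))) (n : ℕ) :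
    ∀ x ∈ S, 2 ^ (n / (K + 1)) ≤ admissibleCount β L m n x := by
  induction n using Nat.strong_induction_on with
  | _ n ih =>
  intro x hx
  rcases lt_or_ge n (K + 1) with hn | hn
  · rw [Nat.div_eq_of_lt hn, pow_zero]
    exact one_le_admissibleCount hβ hβm hL n (hS hx)
  obtain ⟨d₀, d₁, hd, hdig⟩ := hbranch x hx
  have hK : 0 < K + 1 := K.succ_pos
  have hexp : n / (K + 1) - 1 = (n - (K + 1)) / (K + 1) := by
    rw [Nat.div_eq_sub_div hK hn, Nat.add_sub_cancel]
  have hpos : 1 ≤ n / (K + 1) := (Nat.one_le_div_iff hK).2 hn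
  have hhalf : ∀ d ∈ [d₀, d₁],
      2 ^ (n / (K + 1) - 1) ≤ admissibleCount β L m (n - 1) (β * x - (d : ℕ)) := by
    intro d hd
    obtain ⟨-, s, hs, hadm, hrem⟩ := hdig d hd
    calc 2 ^ (n / (K + 1) - 1) ≤ 2 ^ ((n - 1 - s.length) / (K + 1)) :=
          Nat.pow_le_pow_right two_pos (hexp ▸ Nat.div_le_div_right (by omega))
      _ ≤ admissibleCount β L m (n - 1 - s.length) (remainder β s (β * x - (d : ℕ))) :=
          ih _ (by omega) _ hrem
      _ ≤ _ := admissibleCount_remainder_le hadm (by omega)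
  calc 2 ^ (n / (K + 1)) = 2 ^ (n / (K + 1) - 1) + 2 ^ (n / (K + 1) - 1) := by
        rw [← two_mul, ← pow_succ', Nat.sub_add_cancel hpos]
    _ ≤ _ := add_le_add (hhalf d₀ (by simp)) (hhalf d₁ (by simp))
    _ ≤ admissibleCount β L m (n - 1 + 1) x :=
        admissibleCount_add_le_succ hd (hdig d₀ (by simp)).1 (hdig d₁ (by simp)).1 _
    _ = admissibleCount β L m n x := by rw [Nat.sub_add_cancel (by omega)]

theorem two_pow_div_le_admissibleCount_Icc (hβ : 1 < β) (hβm : β ≤ m)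
    (hL : (β - 1) * L = m - 1) (hb1 : 1 < b) (hb : β * (β - 1) * b ≤ 1) (hbL : β * b ≤ L)
    {J K : ℕ} (hK : b / β ≤ β ^ K * (b - 1)) (hJ : β * b ≤ b + J * (1 - β * (β - 1) * b))
    (n : ℕ) : ∀ x ∈ Icc (b / β) b, 2 ^ (n / (J + K + 1)) ≤ admissibleCount β L m n x := by
  have hm : 1 < m := by exact_mod_cast hβ.trans_le hβm
  have hβ0 : 0 < β := by linarith
  refine two_pow_div_le_admissibleCount hβ hβm hL
    (fun x hx => ⟨(div_pos (by linarith) hβ0).le.trans hx.1, hx.2.trans (by nlinarith)⟩)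
    (fun x hx => ⟨⟨0, by omega⟩, ⟨1, hm⟩, by simp [Fin.ext_iff], fun d hd => ?_⟩) n
  have hβx : b ≤ β * x := (div_le_iff₀' hβ0).1 hx.1
  have hmem : β * x - (d : ℕ) ∈ Icc (b - 1) (β * b) := by
    simp only [List.mem_cons, List.not_mem_nil, or_false] at hd
    rcases hd with rfl | rfl <;> simp <;> constructor <;> nlinarith [hx.2]
  exact ⟨⟨by linarith [hmem.1], hmem.2.trans hbL⟩, reachesWithin_Icc hβ hm hb1 hb hbL hK hJ hmem⟩

end CoreInterval

/-- Above `1`, the lazy digit `⌈βy⌉ - 1` lands in `(0, 1]` unless it exceeds `m - 1`; the digit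
`m - 1` instead multiplies the distance to the fixed point `L` by `β`. -/
theorem reachesWithin_Ioc_of_le_pow_mul (hβ : 1 < β) (hL : (β - 1) * L = m - 1) (j : ℕ) :
    ∀ y ∈ Ioo 0 L, L - 1 ≤ β ^ j * (L - y) → ReachesWithin β L m j (Ioc 0 1) y := by
  induction j with
  | zero =>
    intro y hy hyL
    rw [pow_zero, one_mul] at hyL
    exact .of_mem ⟨hy.1, by linarith⟩
  | succ j ih =>
    intro y hy hyL
    by_cases hy1 : y ≤ 1
    · exact .of_mem ⟨hy.1, hy1⟩
    have hm : 1 < m := by exact_mod_cast (show (1 : ℝ) < m by nlinarith [hy.2])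
    by_cases hβy : β * y ≤ m
    · have hceil : 0 < ⌈β * y⌉₊ := Nat.ceil_pos.2 (by nlinarith)
      have hdig : ((⌈β * y⌉₊ - 1 : ℕ) : ℝ) = ⌈β * y⌉₊ - 1 := Nat.cast_pred hceil
      have hlt : ⌈β * y⌉₊ - 1 < m := by have := Nat.ceil_le.2 hβy; omega
      have hmem : β * y - (⌈β * y⌉₊ - 1) ∈ Ioc 0 1 :=
        ⟨by linarith [Nat.ceil_lt_add_one (by nlinarith : 0 ≤ β * y)],
          by linarith [Nat.le_ceil (β * y)]⟩
      exact (ReachesWithin.cons ⟨_, hlt⟩ (by simp [hdig]) ⟨hmem.1.le, by linarith [hmem.2, hy.2]⟩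
        (.of_mem (K := 0) hmem)).mono (by omega)
    · have hgap : L - (β * y - (m - 1)) = β * (L - y) := by linarith
      have hmem : β * y - (m - 1) ∈ Ioo 0 L := ⟨by linarith [not_le.1 hβy], by nlinarith [hy.2]⟩
      refine .cons ⟨m - 1, by omega⟩ (by simp [Nat.cast_pred (by omega : 0 < m)])
        (Ioo_subset_Icc_self hmem) (ih _ hmem ?_)
      rw [hgap, ← mul_assoc, ← pow_succ]
      exact hyL

theorem exists_admissible_remainder_mem_Icc (hβ : 1 < β) (hL : (β - 1) * L = m - 1) {b : ℝ}
    (hb1 : 1 ≤ b) (hbL : b ≤ L) {x : ℝ} (hx : x ∈ Ioo 0 L) :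
    ∃ s : List (Fin m), Admissible β L s x ∧ remainder β s x ∈ Icc (b / β) b := by
  have hm : 0 < m := by exact_mod_cast (show (0 : ℝ) < m by nlinarith [hx.1, hx.2])
  obtain ⟨j, hj⟩ := pow_unbounded_of_one_lt ((L - 1) / (L - x)) hβ
  rw [div_lt_iff₀ (by linarith [hx.2])] at hj
  obtain ⟨s, -, hs, hz⟩ := reachesWithin_Ioc_of_le_pow_mul hβ hL j x hx hj.le
  obtain ⟨k, hk⟩ := pow_unbounded_of_one_lt (b / β / remainder β s x) hβ
  rw [div_lt_iff₀ hz.1] at hk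
  obtain ⟨t, -, ht, hw⟩ :=
    reachesWithin_Icc_of_le_pow_mul hβ hm hbL k _ hz.1.le (hz.2.trans hb1) hk.le
  exact ⟨s ++ t, admissible_append.2 ⟨hs, ht⟩, by rwa [remainder_append]⟩

end BetaExpansion

theorem logb_div_le_logb_of_le_pow {N m n : ℕ} (h : N ≤ m ^ n) :
    Real.logb 2 N / n ≤ Real.logb 2 m := by
  have hm : 0 ≤ Real.logb 2 m := by
    rcases m.eq_zero_or_pos with rfl | hm
    · simp
    · exact Real.logb_nonneg one_lt_two (by exact_mod_cast hm)
  rcases n.eq_zero_or_pos with rfl | hn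
  · simpa using hm
  rcases N.eq_zero_or_pos with rfl | hN
  · simpa using hm
  rw [div_le_iff₀ (by exact_mod_cast hn), mul_comm, ← Real.logb_pow]
  exact Real.logb_le_logb_of_le one_lt_two (by exact_mod_cast hN) (by exact_mod_cast h)

theorem le_liminf_logb_div {N : ℕ → ℕ} {m T K : ℕ} (hK : 0 < K) (hup : ∀ n, N n ≤ m ^ n)
    (hlow : ∀ n ≥ T, 2 ^ ((n - T) / K) ≤ N n) :
    1 / (2 * K) ≤ atTop.liminf fun n => Real.logb 2 (N n) / n := by
  refine le_liminf_of_le (isCoboundedUnder_ge_of_le atTop fun n =>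
    logb_div_le_logb_of_le_pow (hup n)) (eventually_atTop.2 ⟨2 * T + 2 * K, fun n hn => ?_⟩)
  have hn0 : (0 : ℝ) < n := by exact_mod_cast (show 0 < n by omega)
  have hN : (2 : ℝ) ^ ((n - T) / K) ≤ N n := by exact_mod_cast hlow n (by omega)
  have hexp : ((n - T) / K : ℕ) ≤ Real.logb 2 (N n) := by
    rw [Real.le_logb_iff_rpow_le one_lt_two ((pow_pos two_pos _).trans_le hN), Real.rpow_natCast]
    exact hN
  have hlarge : n ≤ 2 * (K * ((n - T) / K)) := by
    have := Nat.lt_mul_div_succ (n - T) hK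
    rw [mul_add, mul_one] at this
    omega
  rw [div_le_div_iff₀ (by positivity) hn0, one_mul, mul_comm]
  calc (n : ℝ) ≤ 2 * K * ((n - T) / K : ℕ) := by
        exact_mod_cast (by linarith : n ≤ 2 * K * ((n - T) / K))
    _ ≤ 2 * K * Real.logb 2 (N n) := by gcongr

theorem mul_sub_one_lt_one_of_mem_Ioo {β : ℝ} (hβ : β ∈ Ioo Real.goldenConj Real.goldenRatio) :
    β * (β - 1) < 1 := by
  have hfactor : 1 - β * (β - 1) = (β - Real.goldenConj) * (Real.goldenRatio - β) := by
    linear_combination (-β) * Real.goldenRatio_add_goldenConj + Real.goldenRatio_mul_goldenConj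
  nlinarith [mul_pos (sub_pos.2 hβ.1) (sub_pos.2 hβ.2)]

theorem exists_core_parameters {β : ℝ} (hβ : 1 < β) (hβφ : β * (β - 1) < 1) :
    ∃ b : ℝ, ∃ J K : ℕ, 1 < b ∧ β * (β - 1) * b < 1 ∧ b / β ≤ β ^ K * (b - 1) ∧
      β * b ≤ b + J * (1 - β * (β - 1) * b) := by
  have hβ0 : 0 < β * (β - 1) := by nlinarith
  obtain ⟨b, hb1, hb⟩ := exists_between ((one_lt_div hβ0).2 hβφ)
  rw [lt_div_iff₀' hβ0] at hb
  obtain ⟨K, hK⟩ := pow_unbounded_of_one_lt (b / β / (b - 1)) hβ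
  obtain ⟨J, hJ⟩ := exists_nat_ge ((β * b - b) / (1 - β * (β - 1) * b))
  rw [div_lt_iff₀ (by linarith)] at hK
  rw [div_le_iff₀ (by linarith)] at hJ
  exact ⟨b, J, K, hb1, hb, hK.le, by linarith⟩

open BetaExpansion in
/-- For β ∈ (1,(1+√5)/2) there is κ = κ(β) > 0 such that for every integer
m ≥ 2 and every x ∈ (0,(m-1)/(β-1)), `liminf (1/n) log₂ 𝒩_n(x;β) ≥ κ`. -/
theorem exponential_growth_small_beta (β : ℝ) (hβ1 : 1 < β)
    (hβ2 : β < (1 + Real.sqrt 5) / 2) :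
    ∃ κ : ℝ, 0 < κ ∧ ∀ m : ℕ, 2 ≤ m → ∀ x : ℝ, x ∈ Ioo (0 : ℝ) ((m - 1) / (β - 1)) →
      κ ≤ atTop.liminf (fun n : ℕ => Real.logb 2 (Nn β m n x) / n) := by
  have hβφ : β * (β - 1) < 1 :=
    mul_sub_one_lt_one_of_mem_Ioo ⟨Real.goldenConj_neg.trans (by linarith), hβ2⟩
  obtain ⟨b, J, K, hb1, hb, hK, hJ⟩ := exists_core_parameters hβ1 hβφ
  refine ⟨1 / (2 * (J + K + 1 : ℕ)), by positivity, fun m hm x hx => ?_⟩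
  set L := ((m : ℝ) - 1) / (β - 1)
  have hL : (β - 1) * L = m - 1 := mul_div_cancel₀ _ (by linarith)
  have hβm : β ≤ m := by nlinarith [(show (2 : ℝ) ≤ m by exact_mod_cast hm)]
  have hbL : β * b ≤ L := by
    rw [le_div_iff₀ (by linarith)]
    nlinarith [(show (2 : ℝ) ≤ m by exact_mod_cast hm)]
  obtain ⟨τ, hτ, hz⟩ := exists_admissible_remainder_mem_Icc hβ1 hL hb1.le (by nlinarith) hx
  refine le_liminf_logb_div (T := τ.length) (J + K).succ_pos (fun n => Nn_le_pow β m n x)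
    fun n hn => ?_
  calc 2 ^ ((n - τ.length) / (J + K + 1))
      ≤ admissibleCount β L m (n - τ.length) (remainder β τ x) :=
        two_pow_div_le_admissibleCount_Icc hβ1 hβm hL hb1 hb.le hbL hK hJ _ _ hz
    _ ≤ admissibleCount β L m n x := admissibleCount_remainder_le hτ (by omega)
    _ ≤ Nn β m n x := admissibleCount_le_Nn hβ1 hβm hL (Ioo_subset_Icc_self hx) n
end

section
/- Let β > 1 be a Pisot number and let m > β be a positive integer. There exists a constant C = C(β,m) > 0 such that for every n ≥ 1 and all words (ε₁,…,ε_n), (ε′₁,…,ε′_n) ∈ {0,1,…,m−1}^n with Σ_{j=1}^n ε_j β^{−j} ≠ Σ_{j=1}^n ε′_j β^{−j}, one has |Σ_{j=1}^n (ε_j − ε′_j) β^{−j}| ≥ C·β^{−n}. -/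
open MeasureTheory Filter Set

/-!
The difference of two digit sums of length `n` is `β⁻¹ ^ n * P(β)` for an integer polynomial `P`
with coefficients bounded by `m - 1`, so it suffices to bound a nonzero `|P(β)|` from below
uniformly in `P`. The element `P(β)` of `ℚ(β)` is a nonzero algebraic integer, hence the product
of its conjugates, its norm, is a nonzero integer. Every other conjugate is `P(β')` for a Galois
conjugate `|β'| < 1`, which the geometric series bounds by `(m - 1) / (1 - |β'|)`; therefore
`|P(β)| ≥ ∏_{β' ≠ β} (1 - |β'|) / (m - 1)`.
-/

open Polynomial IntermediateField

lemma norm_aeval_le_of_abs_coeff_le {P : ℤ[X]} {B : ℝ} (hP : ∀ i, |(P.coeff i : ℝ)| ≤ B)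
    {z : ℂ} (hz : ‖z‖ < 1) : ‖aeval z P‖ ≤ B / (1 - ‖z‖) := by
  have hB : 0 ≤ B := (abs_nonneg _).trans (hP 0)
  rw [aeval_eq_sum_range]
  calc ‖∑ i ∈ Finset.range (P.natDegree + 1), P.coeff i • z ^ i‖
      ≤ ∑ i ∈ Finset.range (P.natDegree + 1), B * ‖z‖ ^ i := by
        refine (norm_sum_le _ _).trans (Finset.sum_le_sum fun i _ => ?_)
        rw [zsmul_eq_mul, norm_mul, norm_pow, Complex.norm_intCast]
        exact mul_le_mul_of_nonneg_right (hP i) (by positivity)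
    _ = B * ∑ i ∈ Finset.Ico 0 (P.natDegree + 1), ‖z‖ ^ i := by
        rw [← Finset.mul_sum, Finset.range_eq_Ico]
    _ ≤ B * (‖z‖ ^ 0 / (1 - ‖z‖)) := by
        gcongr
        exact geom_sum_Ico_le_of_lt_one (norm_nonneg z) hz
    _ = B / (1 - ‖z‖) := by rw [pow_zero, mul_one_div]

lemma one_le_prod_norm_embeddings {K : Type*} [Field K] [Algebra ℚ K] [FiniteDimensional ℚ K]
    {x : K} (hx : IsIntegral ℤ x) (hx0 : x ≠ 0) : 1 ≤ ∏ σ : K →ₐ[ℚ] ℂ, ‖σ x‖ := by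
  obtain ⟨z, hz⟩ := IsIntegrallyClosed.isIntegral_iff.mp (Algebra.isIntegral_norm ℚ hx)
  have hz0 : z ≠ 0 := by
    rintro rfl
    exact Algebra.norm_ne_zero_iff.mpr hx0 (by rw [← hz, map_zero])
  calc (1 : ℝ) ≤ ‖(z : ℂ)‖ := by
        rw [Complex.norm_intCast]; exact_mod_cast Int.one_le_abs hz0
    _ = ∏ σ : K →ₐ[ℚ] ℂ, ‖σ x‖ := by
        rw [← norm_prod, ← Algebra.norm_eq_prod_embeddings, ← hz, eq_intCast, map_intCast]

namespace IsPisot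

variable {β : ℝ}

lemma isIntegral (hβ : IsPisot β) : IsIntegral ℤ β := by
  obtain ⟨-, p, hp, hpβ, -⟩ := hβ
  exact ⟨p, hp, by rwa [← aeval_def]⟩

lemma norm_lt_one_of_aeval_minpoly_eq_zero (hβ : IsPisot β) {z : ℂ}
    (hz : aeval z (minpoly ℚ β) = 0) (hzβ : z ≠ β) : ‖z‖ < 1 := by
  have hint := hβ.isIntegral
  obtain ⟨-, p, -, hpβ, hroots⟩ := hβ
  obtain ⟨q, rfl⟩ := minpoly.isIntegrallyClosed_dvd hint hpβ
  rw [minpoly.isIntegrallyClosed_eq_field_fractions' ℚ hint, aeval_map_algebraMap] at hz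
  exact hroots z (by rw [map_mul, hz, zero_mul]) hzβ

lemma norm_algHom_gen_lt_one (hβ : IsPisot β) (σ : ℚ⟮β⟯ →ₐ[ℚ] ℂ)
    (hσ : σ (AdjoinSimple.gen ℚ β) ≠ β) : ‖σ (AdjoinSimple.gen ℚ β)‖ < 1 := by
  refine hβ.norm_lt_one_of_aeval_minpoly_eq_zero ?_ hσ
  rw [← minpoly_gen ℚ β]
  have h := aeval_algHom_apply σ (AdjoinSimple.gen ℚ β) (minpoly ℚ (AdjoinSimple.gen ℚ β))
  rwa [minpoly.aeval, map_zero] at h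

theorem exists_le_abs_aeval (hβ : IsPisot β) {B : ℝ} (hB : 0 < B) :
    ∃ C > 0, ∀ P : ℤ[X], (∀ i, |(P.coeff i : ℝ)| ≤ B) → aeval β P ≠ 0 → C ≤ |aeval β P| := by
  classical
  have : FiniteDimensional ℚ ℚ⟮β⟯ := adjoin.finiteDimensional hβ.isIntegral.tower_top
  set g := AdjoinSimple.gen ℚ β
  let σ₀ : ℚ⟮β⟯ →ₐ[ℚ] ℂ :=
    (Complex.ofRealAm.restrictScalars ℚ).comp (IsScalarTower.toAlgHom ℚ ℚ⟮β⟯ ℝ)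
  have hconj : ∀ σ ∈ Finset.univ.erase σ₀, ‖σ g‖ < 1 := fun σ hσ =>
    hβ.norm_algHom_gen_lt_one σ fun hσg =>
      Finset.ne_of_mem_erase hσ (adjoin_algHom_ext ℚ fun x hx => by
        obtain rfl := hx; exact hσg)
  set M := ∏ σ ∈ Finset.univ.erase σ₀, B / (1 - ‖σ g‖)
  have hM : 0 < M := Finset.prod_pos fun σ hσ => div_pos hB (sub_pos.mpr (hconj σ hσ))
  refine ⟨M⁻¹, inv_pos.mpr hM, fun P hP hP0 => ?_⟩
  set x := aeval g P
  have hσx : ∀ σ : ℚ⟮β⟯ →ₐ[ℚ] ℂ, σ x = aeval (σ g) P := fun σ => by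
    simpa using (aeval_algHom_apply (σ.restrictScalars ℤ) g P).symm
  have hσ₀x : ‖σ₀ x‖ = |aeval β P| := by
    rw [hσx, show σ₀ g = algebraMap ℝ ℂ β from rfl, aeval_algebraMap_apply]
    exact Complex.norm_real _
  have hx0 : x ≠ 0 := fun h => hP0 (by simpa [h] using hσ₀x.symm)
  have hgint : IsIntegral ℤ g := by
    rw [← isIntegral_algebraMap_iff (algebraMap ℚ⟮β⟯ ℝ).injective]
    exact hβ.isIntegral
  have hxint : IsIntegral ℤ x :=
    Algebra.adjoin_le (S := integralClosure ℤ ℚ⟮β⟯) (Set.singleton_subset_iff.mpr hgint)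
      (aeval_mem_adjoin_singleton ℤ g)
  rw [inv_le_iff_one_le_mul₀ hM]
  calc 1 ≤ ∏ σ : ℚ⟮β⟯ →ₐ[ℚ] ℂ, ‖σ x‖ := one_le_prod_norm_embeddings hxint hx0
    _ = |aeval β P| * ∏ σ ∈ Finset.univ.erase σ₀, ‖σ x‖ := by
        rw [← Finset.mul_prod_erase _ _ (Finset.mem_univ σ₀), hσ₀x]
    _ ≤ |aeval β P| * M := by
        gcongr
        refine Finset.prod_le_prod (fun _ _ => norm_nonneg _) fun σ hσ => ?_
        rw [hσx]
        exact norm_aeval_le_of_abs_coeff_le hP (hconj σ hσ)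

end IsPisot

lemma sum_intCast_div_pow_succ_eq {K : Type*} [Field K] {n : ℕ} (a : Fin n → ℤ) {β : K}
    (hβ : β ≠ 0) :
    ∑ j : Fin n, (a j : K) / β ^ ((j : ℕ) + 1) = β⁻¹ ^ n * aeval β (ofFn n fun j => a j.rev) := by
  rw [ofFn_eq_sum_monomial, map_sum, Finset.mul_sum, ← Equiv.sum_comp Fin.revPerm]
  refine Finset.sum_congr rfl fun j _ => ?_
  rw [Fin.revPerm_apply, aeval_monomial, Fin.val_rev, eq_intCast,
    show n - (j + 1) + 1 = n - j by omega, pow_sub₀ β hβ j.is_lt.le, inv_pow]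
  field_simp

lemma Fin.abs_natCast_sub_natCast_le {m : ℕ} (i j : Fin m) :
    |((i : ℕ) : ℝ) - (j : ℕ)| ≤ m - 1 := by
  have hi : ((i : ℕ) : ℝ) + 1 ≤ m := by exact_mod_cast i.isLt
  have hj : ((j : ℕ) : ℝ) + 1 ≤ m := by exact_mod_cast j.isLt
  rw [abs_sub_le_iff]
  constructor <;> linarith [(i : ℕ).cast_nonneg (α := ℝ), (j : ℕ).cast_nonneg (α := ℝ)]

/-- Garsia separation: for a Pisot number β and integer m > β, there is
C > 0 such that any two distinct values of `Σ_{j=1}^n ε_j β^{-j}` with digits in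
`{0,…,m-1}` differ by at least `C β^{-n}`. -/
theorem garsia_separation (β : ℝ) (m : ℕ) (hβ : IsPisot β) (hm : β < m) :
    ∃ C : ℝ, 0 < C ∧ ∀ n : ℕ, 1 ≤ n → ∀ ε ε' : Fin n → Fin m,
      (∑ j : Fin n, ((ε j : ℕ) : ℝ) / β ^ ((j : ℕ) + 1)) ≠
        (∑ j : Fin n, ((ε' j : ℕ) : ℝ) / β ^ ((j : ℕ) + 1)) →
      C * β⁻¹ ^ n ≤
        |∑ j : Fin n, (((ε j : ℕ) : ℝ) - ((ε' j : ℕ) : ℝ)) / β ^ ((j : ℕ) + 1)| := by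
  obtain ⟨C, hC, hsep⟩ := hβ.exists_le_abs_aeval (B := m - 1) (by linarith [hβ.1])
  refine ⟨C, hC, fun n _ ε ε' hne => ?_⟩
  have hβ0 : 0 < β := by linarith [hβ.1]
  set P : ℤ[X] := ofFn n fun j => (ε j.rev : ℤ) - (ε' j.rev : ℤ)
  have hsum : ∑ j : Fin n, (((ε j : ℕ) : ℝ) - ((ε' j : ℕ) : ℝ)) / β ^ ((j : ℕ) + 1) =
      β⁻¹ ^ n * aeval β P := by
    have h := sum_intCast_div_pow_succ_eq (fun j => (ε j : ℤ) - (ε' j : ℤ)) hβ0.ne'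
    push_cast at h
    exact h
  have hcoeff : ∀ i, |(P.coeff i : ℝ)| ≤ m - 1 := by
    intro i
    rcases lt_or_ge i n with hi | hi
    · rw [ofFn_coeff_eq_val_of_lt _ hi]
      push_cast
      exact Fin.abs_natCast_sub_natCast_le _ _
    · rw [ofFn_coeff_eq_zero_of_ge _ hi, Int.cast_zero, abs_zero]
      linarith [hβ.1]
  have hP0 : aeval β P ≠ 0 := fun h => hne <| by
    rw [← sub_eq_zero, ← Finset.sum_sub_distrib]
    simp_rw [← sub_div]
    rw [hsum, h, mul_zero]
  rw [hsum, abs_mul, abs_of_pos (by positivity), mul_comm]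
  exact mul_le_mul_of_nonneg_left (hsep P hcoeff hP0) (by positivity)
end

section
/- Let β > 1 be a real number, m > β a positive integer with m ≥ 2, and set ρ = 1/β and S_i(t) = ρt + (i−1)(1−ρ)/(m−1) for i = 1,…,m. Then for every z ∈ [0,1] and every n ≥ 1, 𝒩_n((m−1)z/(β−1); β) equals the number of words (j₁,…,j_n) ∈ {1,…,m}^n such that z ∈ S_{j₁}∘S_{j₂}∘⋯∘S_{j_n}([0,1]). -/
open MeasureTheory Filter Set

/-- The map `S_i(t) = ρ t + (i-1)(1-ρ)/(m-1)` with `ρ = 1/β`, where `i : Fin m`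
represents the index `i+1 ∈ {1,…,m}` (so the shift coefficient is `i`). -/
noncomputable def Smap (β : ℝ) (m : ℕ) (i : Fin m) (t : ℝ) : ℝ :=
  β⁻¹ * t + ((i : ℕ) : ℝ) * (1 - β⁻¹) / ((m : ℝ) - 1)


/-!
Write `M = (m - 1) / (β - 1)`. Values of digit sequences with digits below `m` fill exactly
`[0, M]`: the upper bound is a geometric series, and for `β ≤ m` the greedy algorithm expands
every point of `[0, M]`. Hence `x` has an expansion starting with the word `w` iff
`x = Σ_{k<n} w_k β^{-(k+1)} + r β^{-n}` for some `r ∈ [0, M]`. The scaling `t ↦ M t` conjugates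
each `S_i` to the digit map `r ↦ (i + r) / β`, so `M · S_w(t)` has exactly this form with
`r = M t`, and the two sets of words coincide.
-/

lemma Fin.cast_val_le_sub_one {m : ℕ} (i : Fin m) : ((i : ℕ) : ℝ) ≤ m - 1 := by
  have : (i : ℕ) + 1 ≤ m := i.isLt
  rw [le_sub_iff_add_le]
  exact_mod_cast this

lemma hasSum_div_pow_succ {β : ℝ} (hβ : 1 < β) (c : ℝ) :
    HasSum (fun k : ℕ => c / β ^ (k + 1)) (c / (β - 1)) := by
  have hβ₀ : β ≠ 0 := by positivity
  have hβ₁ : β - 1 ≠ 0 := by linarith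
  have hterm : (fun k : ℕ => c / β ^ (k + 1)) = fun k => c / β * β⁻¹ ^ k := by
    ext k
    rw [inv_pow, pow_succ']
    field_simp
  rw [hterm, show c / (β - 1) = c / β * (1 - β⁻¹)⁻¹ by field_simp]
  exact (hasSum_geometric_of_lt_one (by positivity) (inv_lt_one_of_one_lt₀ hβ)).mul_left _

noncomputable def wordValue (β : ℝ) {m n : ℕ} (w : Fin n → Fin m) : ℝ :=
  ∑ k : Fin n, ((w k : ℕ) : ℝ) / β ^ ((k : ℕ) + 1)

noncomputable def expansionValue (β : ℝ) {m : ℕ} (ε : ℕ → Fin m) : ℝ :=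
  ∑' k : ℕ, ((ε k : ℕ) : ℝ) / β ^ (k + 1)

noncomputable def greedyDigit (β : ℝ) (m : ℕ) (t : ℝ) : ℕ := min (m - 1) ⌊β * t⌋₊

noncomputable def greedyStep (β : ℝ) (m : ℕ) (t : ℝ) : ℝ := β * t - greedyDigit β m t

section Expansion

variable {β : ℝ} {m : ℕ}

lemma summable_expansion (hβ : 1 < β) (ε : ℕ → Fin m) :
    Summable fun k : ℕ => ((ε k : ℕ) : ℝ) / β ^ (k + 1) :=
  (hasSum_div_pow_succ hβ (m - 1)).summable.of_nonneg_of_le (fun _ => by positivity)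
    fun k => by gcongr; exact (ε k).cast_val_le_sub_one

lemma expansionValue_nonneg (hβ : 0 ≤ β) (ε : ℕ → Fin m) : 0 ≤ expansionValue β ε :=
  tsum_nonneg fun _ => by positivity

lemma expansionValue_le (hβ : 1 < β) (ε : ℕ → Fin m) :
    expansionValue β ε ≤ (m - 1) / (β - 1) :=
  hasSum_le (fun k => by gcongr; exact (ε k).cast_val_le_sub_one)
    (summable_expansion hβ ε).hasSum (hasSum_div_pow_succ hβ (m - 1))

lemma expansionValue_eq_wordValue_add (hβ : 1 < β) (ε : ℕ → Fin m) (n : ℕ) :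
    expansionValue β ε =
      wordValue β (fun k : Fin n => ε k) + expansionValue β (fun j => ε (j + n)) / β ^ n := by
  rw [expansionValue, ← (summable_expansion hβ ε).sum_add_tsum_nat_add n, wordValue,
    Fin.sum_univ_eq_sum_range (fun k => ((ε k : ℕ) : ℝ) / β ^ (k + 1)), expansionValue,
    ← tsum_div_const]
  congr 1
  refine tsum_congr fun j => ?_
  rw [div_div, ← pow_add, add_right_comm]

lemma greedyDigit_lt (hm : 0 < m) (t : ℝ) : greedyDigit β m t < m :=
  (min_le_left _ _).trans_lt (Nat.sub_lt hm one_pos)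

lemma greedyStep_mapsTo (hβ : 1 < β) (hm : β ≤ m) :
    MapsTo (greedyStep β m) (Icc 0 ((m - 1) / (β - 1))) (Icc 0 ((m - 1) / (β - 1))) := by
  intro t ht
  have hβ₁ : 0 < β - 1 := by linarith
  have hβt : 0 ≤ β * t := mul_nonneg (by linarith) ht.1
  have hM : 1 ≤ (m - 1) / (β - 1) := by rw [le_div_iff₀ hβ₁]; linarith
  have hdig : (greedyDigit β m t : ℝ) ≤ ⌊β * t⌋₊ := by
    exact_mod_cast min_le_right _ _
  rw [mem_Icc, greedyStep]
  refine ⟨by linarith [Nat.floor_le hβt], ?_⟩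
  rcases min_cases (m - 1) ⌊β * t⌋₊ with ⟨hd, -⟩ | ⟨hd, -⟩
  · -- the digit saturates at `m - 1`, and `β M - (m - 1) = M`
    have hm₁ : 1 ≤ m := by exact_mod_cast (hβ.trans_le hm).le
    have hβM : β * ((m - 1) / (β - 1)) = (m - 1) / (β - 1) + (m - 1) := by
      field_simp; ring
    rw [greedyDigit, hd, Nat.cast_sub hm₁, Nat.cast_one]
    nlinarith [ht.2]
  · -- the remainder is a fractional part, and `1 ≤ M` is where `β ≤ m` enters
    rw [greedyDigit, hd]
    linarith [Nat.lt_floor_add_one (β * t)]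

lemma eq_sum_greedyDigit_add (hβ : β ≠ 0) (y : ℝ) (n : ℕ) :
    y = ∑ k ∈ Finset.range n, (greedyDigit β m ((greedyStep β m)^[k] y) : ℝ) / β ^ (k + 1)
      + (greedyStep β m)^[n] y / β ^ n := by
  induction n with
  | zero => simp
  | succ n ih =>
    rw [Finset.sum_range_succ, Function.iterate_succ_apply', greedyStep, pow_succ]
    conv_lhs => rw [ih]
    field_simp
    ring

lemma exists_expansionValue_eq (hβ : 1 < β) (hm : β ≤ m) {y : ℝ}
    (hy : y ∈ Icc 0 ((m - 1) / (β - 1))) : ∃ ε : ℕ → Fin m, expansionValue β ε = y := by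
  have hm₀ : 0 < m := by exact_mod_cast (zero_lt_one.trans hβ).trans_le hm
  set T := greedyStep β m
  have horbit : ∀ k, T^[k] y ∈ Icc 0 ((m - 1) / (β - 1)) := fun k =>
    (greedyStep_mapsTo hβ hm).iterate k hy
  refine ⟨fun k => ⟨greedyDigit β m (T^[k] y), greedyDigit_lt hm₀ _⟩,
    HasSum.tsum_eq ((hasSum_iff_tendsto_nat_of_nonneg (fun _ => by positivity) y).2 ?_)⟩
  have hrem : Tendsto (fun n => T^[n] y / β ^ n) atTop (nhds 0) :=
    squeeze_zero (fun n => div_nonneg (horbit n).1 (by positivity))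
      (fun n => div_le_div_of_nonneg_right (horbit n).2 (by positivity))
      (tendsto_const_nhds.div_atTop (tendsto_pow_atTop_atTop_of_one_lt hβ))
  have hsum := (tendsto_const_nhds (x := y)).sub hrem
  rw [sub_zero] at hsum
  refine hsum.congr fun n => ?_
  exact sub_eq_iff_eq_add.2 (eq_sum_greedyDigit_add (by positivity) y n)

lemma exists_expansion_with_prefix_iff (hβ : 1 < β) (hm : β ≤ m) {n : ℕ} (w : Fin n → Fin m)
    (x : ℝ) :
    (∃ ε : ℕ → Fin m, (∀ k : Fin n, ε k = w k) ∧ x = expansionValue β ε) ↔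
      ∃ r ∈ Icc 0 ((m - 1) / (β - 1)), x = wordValue β w + r / β ^ n := by
  constructor
  · rintro ⟨ε, hw, rfl⟩
    refine ⟨expansionValue β (fun j => ε (j + n)),
      ⟨expansionValue_nonneg (by positivity) _, expansionValue_le hβ _⟩, ?_⟩
    rw [expansionValue_eq_wordValue_add hβ ε n, funext hw]
  · rintro ⟨r, hr, rfl⟩
    obtain ⟨δ, rfl⟩ := exists_expansionValue_eq hβ hm hr
    let ε : ℕ → Fin m := fun k => if h : k < n then w ⟨k, h⟩ else δ (k - n)
    refine ⟨ε, fun k => dif_pos k.isLt, ?_⟩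
    rw [expansionValue_eq_wordValue_add hβ ε n]
    simp [ε]

lemma mul_Smap (hβ₀ : β ≠ 0) (hβ₁ : β ≠ 1) (hm : m ≠ 1) (i : Fin m) (t : ℝ) :
    (m - 1) / (β - 1) * Smap β m i t = (i + (m - 1) / (β - 1) * t) / β := by
  have hβ₁' : β - 1 ≠ 0 := sub_ne_zero.2 hβ₁
  have hm' : (m : ℝ) - 1 ≠ 0 := sub_ne_zero.2 (by exact_mod_cast hm)
  rw [Smap]
  field_simp
  ring

lemma mul_foldr_Smap (hβ₀ : β ≠ 0) (hβ₁ : β ≠ 1) (hm : m ≠ 1) {n : ℕ} (w : Fin n → Fin m)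
    (t : ℝ) :
    (m - 1) / (β - 1) * (List.ofFn fun k => Smap β m (w k)).foldr (· ∘ ·) id t =
      wordValue β w + (m - 1) / (β - 1) * t / β ^ n := by
  induction n with
  | zero => simp [wordValue]
  | succ n ih =>
    rw [List.ofFn_succ, List.foldr_cons, Function.comp_apply, mul_Smap hβ₀ hβ₁ hm, ih,
      wordValue, wordValue, Fin.sum_univ_succ]
    simp only [Fin.val_zero, Fin.val_succ, zero_add, pow_one, add_div, Finset.sum_div, div_div,
      ← pow_succ]
    rw [pow_succ β n]
    ring

end Expansion

theorem Nn_eq_card_covering_words_general (β : ℝ) (hβ : 1 < β) (m : ℕ)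
    (hm : β < m) (z : ℝ) (n : ℕ) :
    Nn β m n (((m : ℝ) - 1) * z / (β - 1)) =
      Nat.card {J : Fin n → Fin m //
        z ∈ ((List.ofFn fun k : Fin n => Smap β m (J k)).foldr (· ∘ ·) id) ''
          (Icc (0 : ℝ) 1)} := by
  have hM : 0 < ((m : ℝ) - 1) / (β - 1) := div_pos (by linarith) (by linarith)
  have hm₁ : m ≠ 1 := by
    rintro rfl
    norm_num at hm
    linarith
  have hSw := mul_foldr_Smap (β := β) (n := n) (by positivity) hβ.ne' hm₁
  refine Nat.card_congr (Equiv.subtypeEquivRight fun w => ?_)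
  rw [mul_div_right_comm]
  refine (exists_expansion_with_prefix_iff hβ hm.le w _).trans ?_
  constructor
  · rintro ⟨r, ⟨hr₀, hrM⟩, hz⟩
    refine ⟨r / ((m - 1) / (β - 1)), ⟨div_nonneg hr₀ hM.le, (div_le_one hM).2 hrM⟩,
      mul_left_cancel₀ hM.ne' ?_⟩
    rw [hSw, mul_div_cancel₀ _ hM.ne', hz]
  · rintro ⟨t, ⟨ht₀, ht₁⟩, rfl⟩
    exact ⟨_, ⟨mul_nonneg hM.le ht₀, mul_le_of_le_one_right hM.le ht₁⟩, hSw w t⟩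

/-- `𝒩_n((m-1)z/(β-1); β)` equals the number of words J of length n
with `z ∈ S_J([0,1])`. -/
theorem Nn_eq_card_covering_words (β : ℝ) (hβ : 1 < β) (m : ℕ) (hm2 : 2 ≤ m)
    (hm : β < m) (z : ℝ) (hz : z ∈ Icc (0 : ℝ) 1) (n : ℕ) (hn : 1 ≤ n) :
    Nn β m n (((m : ℝ) - 1) * z / (β - 1)) =
      Nat.card {J : Fin n → Fin m //
        z ∈ ((List.ofFn fun k : Fin n => Smap β m (J k)).foldr (· ∘ ·) id) ''
          (Icc (0 : ℝ) 1)} :=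
  Nn_eq_card_covering_words_general β hβ m hm z n
end

section
/- Let β ∈ (1, (1+√5)/2) and m = 2, and define κ = (1/2)·(⌊log_β((β²−1)/(1+β−β²))⌋ + 1)^{−1} if β > √2, and κ = (1/2)·(⌊log_β(1/(β−1))⌋ + 1)^{−1} if β ≤ √2. Then κ > 0, and for every x ∈ [1/β, 1/(β(β−1))] and every n ≥ 1 one has 𝒩_n(x;β) ≥ 2^{κn−1}. -/
open MeasureTheory Filter Set

/-- The constant κ(β) of Theorem 5.2 / (5.1): κ = ½(⌊log_β((β²-1)/(1+β-β²))⌋+1)⁻¹ for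
β > √2 and κ = ½(⌊log_β(1/(β-1))⌋+1)⁻¹ for β ≤ √2. -/
noncomputable def kappa (β : ℝ) : ℝ :=
  if Real.sqrt 2 < β then
    (1 / 2) * ((⌊Real.logb β ((β ^ 2 - 1) / (1 + β - β ^ 2))⌋ : ℝ) + 1)⁻¹
  else
    (1 / 2) * ((⌊Real.logb β (1 / (β - 1))⌋ : ℝ) + 1)⁻¹

/-!
Write `γ = 1/(β-1)`, so that every `x ∈ [0, γ]` has a β-expansion. Prepending the digit `d` to an
expansion of `βx - d` gives one of `x`, hence `𝒩_{n+1}(x) ≥ 𝒩_n(βx) + 𝒩_n(βx - 1)`. Starting from a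
point `x` of the switch region, after at most one forced digit one reaches a point `z` from which
both the word `1 0⋯0` and the word `0 1⋯1` lead back into the switch region, all within
`M = 2L + 2` digits, where `κ = 1/M`; the choice of `L` as the integer part of the logarithm in the
definition of `κ` is what makes this budget suffice.
Hence `𝒩_{n+M}(x) ≥ 𝒩_n(y₁) + 𝒩_n(y₂)` for two points `y₁, y₂` of the switch region, so
`𝒩_{kM} ≥ 2^k` there, and monotonicity of `𝒩_n` in `n` gives `𝒩_n ≥ 2^{n/M - 1}`.
-/

noncomputable def betaValue (β : ℝ) {m : ℕ} (ε : ℕ → Fin m) : ℝ :=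
  ∑' k : ℕ, ((ε k : ℕ) : ℝ) / β ^ (k + 1)

section Counting

variable {β : ℝ} {m : ℕ}

theorem summable_digits (hβ : 1 < β) (ε : ℕ → Fin m) :
    Summable fun k => ((ε k : ℕ) : ℝ) / β ^ (k + 1) := by
  have hβ0 : 0 < β := zero_lt_one.trans hβ
  have hgeom : Summable fun k : ℕ => (m : ℝ) * β⁻¹ ^ (k + 1) :=
    ((summable_nat_add_iff 1).2 (summable_geometric_of_lt_one (inv_nonneg.2 hβ0.le)
      (inv_lt_one_of_one_lt₀ hβ))).mul_left _
  refine .of_nonneg_of_le (fun k => by positivity) (fun k => ?_) hgeom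
  rw [inv_pow, ← div_eq_mul_inv]
  gcongr
  exact_mod_cast (ε k).is_lt.le

theorem betaValue_casesOn (hβ : 1 < β) (d : Fin m) (ε : ℕ → Fin m) :
    betaValue β (fun k => Nat.casesOn k d ε) = ((d : ℕ) + betaValue β ε) / β := by
  rw [betaValue, (summable_digits hβ _).tsum_eq_zero_add, betaValue]
  simp only [Nat.rec_zero, pow_succ _ (_ + 1), ← div_div, tsum_div_const]
  ring

theorem Nn_le_Nn_add (β : ℝ) (m n k : ℕ) (x : ℝ) : Nn β m n x ≤ Nn β m (n + k) x := by
  refine Nat.card_le_card_of_surjective (fun w => ⟨fun i => w.1 (Fin.castAdd k i), ?_⟩) ?_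
  · obtain ⟨ε, hεw, hε⟩ := w.2
    exact ⟨ε, fun i => hεw (Fin.castAdd k i), hε⟩
  · rintro ⟨w, ε, hεw, hε⟩
    exact ⟨⟨fun i => ε i, ε, fun _ => rfl, hε⟩, Subtype.ext (funext fun i => hεw i)⟩

theorem sum_Nn_le_Nn_succ (hβ : 1 < β) (n : ℕ) (x : ℝ) :
    ∑ d : Fin m, Nn β m n (β * x - (d : ℕ)) ≤ Nn β m (n + 1) x := by
  unfold Nn
  rw [← Nat.card_sigma]
  refine Nat.card_le_card_of_injective (fun p => ⟨Fin.cons p.1 p.2.1, ?_⟩) ?_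
  · obtain ⟨d, w, ε, hεw, hε⟩ := p
    refine ⟨fun k => Nat.casesOn k d ε, fun k => Fin.cases rfl (fun i => hεw i) k, ?_⟩
    change β * x - _ = betaValue β ε at hε
    change x = betaValue β _
    rw [betaValue_casesOn hβ, ← hε]
    field_simp [(zero_lt_one.trans hβ).ne']
    ring
  · rintro ⟨d, w, _⟩ ⟨d', w', _⟩ h
    have hcons : (Fin.cons d w : Fin (n + 1) → Fin m) = Fin.cons d' w' := congrArg Subtype.val h
    obtain ⟨rfl, rfl⟩ := Fin.cons_inj.1 hcons
    rfl

theorem Nn_mul_add_Nn_mul_sub_one_le (hβ : 1 < β) (n : ℕ) (x : ℝ) :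
    Nn β 2 n (β * x) + Nn β 2 n (β * x - 1) ≤ Nn β 2 (n + 1) x := by
  simpa using sum_Nn_le_Nn_succ (m := 2) hβ n x

theorem Nn_mul_le (hβ : 1 < β) (n : ℕ) (x : ℝ) : Nn β 2 n (β * x) ≤ Nn β 2 (n + 1) x :=
  le_of_add_le_left (Nn_mul_add_Nn_mul_sub_one_le hβ n x)

theorem Nn_mul_sub_one_le (hβ : 1 < β) (n : ℕ) (x : ℝ) :
    Nn β 2 n (β * x - 1) ≤ Nn β 2 (n + 1) x :=
  le_of_add_le_right (Nn_mul_add_Nn_mul_sub_one_le hβ n x)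

theorem Nn_pow_mul_le (hβ : 1 < β) (n a : ℕ) (x : ℝ) :
    Nn β 2 n (β ^ a * x) ≤ Nn β 2 (n + a) x := by
  induction a generalizing x with
  | zero => simp
  | succ a ih =>
    rw [pow_succ, mul_assoc, ← add_assoc]
    exact (ih (β * x)).trans (Nn_mul_le hβ _ x)

theorem Nn_sub_pow_mul_le (hβ : 1 < β) (n b : ℕ) (x : ℝ) :
    Nn β 2 n ((β - 1)⁻¹ - β ^ b * ((β - 1)⁻¹ - x)) ≤ Nn β 2 (n + b) x := by
  induction b generalizing x with
  | zero => simp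
  | succ b ih =>
    -- `y ↦ (β - 1)⁻¹ - y` conjugates `y ↦ β * y - 1` to `y ↦ β * y`
    have hconj : β * ((β - 1)⁻¹ - x) = (β - 1)⁻¹ - (β * x - 1) := by
      field_simp [(sub_pos.2 hβ).ne']
      ring
    rw [pow_succ, mul_assoc, hconj, ← add_assoc]
    exact (ih (β * x - 1)).trans (Nn_mul_sub_one_le hβ _ x)

end Counting

section Existence

variable {β : ℝ} {m : ℕ}

theorem exists_betaValue_eq (hβ : 1 < β) {A : Set ℝ} {C : ℝ} (hAC : ∀ y ∈ A, |y| ≤ C)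
    (hstep : ∀ y ∈ A, ∃ d : Fin m, β * y - (d : ℕ) ∈ A) {x : ℝ} (hx : x ∈ A) :
    ∃ ε : ℕ → Fin m, x = betaValue β ε := by
  have hβ0 : 0 < β := zero_lt_one.trans hβ
  choose D hD using hstep
  let orbit : ℕ → A := fun k =>
    Nat.rec (motive := fun _ => A) ⟨x, hx⟩ (fun _ y => ⟨β * y - (D y y.2 : ℕ), hD y y.2⟩) k
  let ε : ℕ → Fin m := fun k => D (orbit k) (orbit k).2
  have hpartial : ∀ n, x = ∑ i ∈ Finset.range n, ((ε i : ℕ) : ℝ) / β ^ (i + 1)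
      + (orbit n : ℝ) / β ^ n := by
    intro n
    induction n with
    | zero => simp [orbit]
    | succ n ih =>
      have horbit : (orbit (n + 1) : ℝ) = β * orbit n - (ε n : ℕ) := rfl
      rw [Finset.sum_range_succ, horbit, ih]
      field_simp
      ring
  have hrem : Tendsto (fun n => (orbit n : ℝ) / β ^ n) atTop (nhds 0) := by
    refine squeeze_zero_norm (a := fun n => C * β⁻¹ ^ n) (fun n => ?_) ?_
    · rw [Real.norm_eq_abs, abs_div, abs_of_pos (pow_pos hβ0 n), inv_pow, ← div_eq_mul_inv]
      gcongr
      exact hAC _ (orbit n).2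
    · simpa using (tendsto_pow_atTop_nhds_zero_of_lt_one (inv_nonneg.2 hβ0.le)
        (inv_lt_one_of_one_lt₀ hβ)).const_mul C
  have hsum : HasSum (fun k => ((ε k : ℕ) : ℝ) / β ^ (k + 1)) x := by
    refine (hasSum_iff_tendsto_nat_of_nonneg (fun k => by positivity) x).2 ?_
    have := (tendsto_const_nhds (x := x)).sub hrem
    rw [sub_zero] at this
    refine this.congr fun n => ?_
    linarith [hpartial n]
  exact ⟨ε, hsum.tsum_eq.symm⟩

theorem one_le_Nn (hβ : 1 < β) {A : Set ℝ} {C : ℝ} (hAC : ∀ y ∈ A, |y| ≤ C)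
    (hstep : ∀ y ∈ A, ∃ d : Fin m, β * y - (d : ℕ) ∈ A) {x : ℝ} (hx : x ∈ A) (n : ℕ) :
    1 ≤ Nn β m n x := by
  obtain ⟨ε, hε⟩ := exists_betaValue_eq hβ hAC hstep hx
  have : Nonempty {w : Fin n → Fin m // ∃ ε : ℕ → Fin m,
      (∀ k : Fin n, ε k = w k) ∧ x = ∑' k : ℕ, ((ε k : ℕ) : ℝ) / β ^ (k + 1)} :=
    ⟨⟨fun i => ε i, ε, fun _ => rfl, hε⟩⟩
  exact Nat.card_pos

theorem one_le_Nn_of_mem_Icc (hβ : 1 < β) (hβ2 : β ≤ 2) {x : ℝ} (hx : x ∈ Icc 0 (β - 1)⁻¹)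
    (n : ℕ) : 1 ≤ Nn β 2 n x := by
  have hβ1 : 0 < β - 1 := sub_pos.2 hβ
  have hγ : β * (β - 1)⁻¹ - 1 = (β - 1)⁻¹ := by field_simp; ring
  have hγ1 : 1 ≤ (β - 1)⁻¹ := one_le_inv₀ hβ1 |>.2 (by linarith)
  refine one_le_Nn hβ (C := (β - 1)⁻¹) (fun y hy => abs_le.2 ⟨by linarith [hy.1], hy.2⟩) ?_ hx n
  rintro y ⟨hy0, hy1⟩
  by_cases h : 1 ≤ β * y
  · refine ⟨1, ?_, ?_⟩ <;> simp only [Fin.val_one, Nat.cast_one]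
    · linarith
    · nlinarith
  · refine ⟨0, ?_, ?_⟩ <;> simp only [Fin.val_zero, Nat.cast_zero, sub_zero]
    · positivity
    · linarith

end Existence

def switchRegion (β : ℝ) : Set ℝ := Icc (1 / β) (1 / (β * (β - 1)))

def Branches (β : ℝ) (k : ℕ) (x : ℝ) : Prop :=
  ∃ y₁ ∈ switchRegion β, ∃ y₂ ∈ switchRegion β, ∀ n, Nn β 2 n y₁ + Nn β 2 n y₂ ≤ Nn β 2 (n + k) x

section SwitchRegion

variable {β : ℝ}

theorem mem_switchRegion (hβ : 1 < β) {x : ℝ} :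
    x ∈ switchRegion β ↔ β⁻¹ ≤ x ∧ x ≤ (β - 1)⁻¹ - β⁻¹ := by
  have hβ0 : β ≠ 0 := (zero_lt_one.trans hβ).ne'
  have hβ1 : β - 1 ≠ 0 := (sub_pos.2 hβ).ne'
  rw [switchRegion, mem_Icc, one_div, show 1 / (β * (β - 1)) = (β - 1)⁻¹ - β⁻¹ by
    field_simp; ring]

theorem inv_sub_mem_switchRegion (hβ : 1 < β) {x : ℝ} (hx : x ∈ switchRegion β) :
    (β - 1)⁻¹ - x ∈ switchRegion β := by
  rw [mem_switchRegion hβ] at hx ⊢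
  constructor <;> linarith

theorem one_le_inv_sub_inv (hβ : 1 < β) (hgold : β ^ 2 ≤ β + 1) : 1 ≤ (β - 1)⁻¹ - β⁻¹ := by
  have hβ0 : 0 < β := zero_lt_one.trans hβ
  have hβ1 : 0 < β - 1 := sub_pos.2 hβ
  rw [show (β - 1)⁻¹ - β⁻¹ = 1 / (β * (β - 1)) by field_simp; ring, le_div_iff₀ (by positivity)]
  nlinarith

theorem exists_pow_mul_mem_switchRegion (hβ : 1 < β) (hgold : β ^ 2 ≤ β + 1) {y : ℝ} {B : ℕ}
    (hy : y ≤ (β - 1)⁻¹ - 1) (hB : 1 ≤ β ^ (B + 1) * y) :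
    ∃ a ≤ B, β ^ a * y ∈ switchRegion β := by
  classical
  have hβ0 : 0 < β := zero_lt_one.trans hβ
  have hex : ∃ a, 1 ≤ β ^ (a + 1) * y := ⟨B, hB⟩
  have hγ := one_le_inv_sub_inv hβ hgold
  have hβinv : β⁻¹ ≤ 1 := inv_le_one_of_one_le₀ hβ.le
  refine ⟨Nat.find hex, Nat.find_min' hex hB, (mem_switchRegion hβ).2 ⟨?_, ?_⟩⟩
  · have h := Nat.find_spec hex
    rw [pow_succ, mul_right_comm] at h
    exact (inv_le_iff_one_le_mul₀ hβ0).2 h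
  · rcases hfind : Nat.find hex with _ | a
    · rw [pow_zero, one_mul]
      linarith
    · have h := not_le.1 (Nat.find_min hex (show a < Nat.find hex by omega))
      linarith


theorem Branches.of_le {k j : ℕ} {x z : ℝ} (hz : Branches β k z)
    (hzx : ∀ n, Nn β 2 n z ≤ Nn β 2 (n + j) x) : Branches β (k + j) x := by
  obtain ⟨y₁, hy₁, y₂, hy₂, h⟩ := hz
  exact ⟨y₁, hy₁, y₂, hy₂, fun n => (h n).trans (by simpa [add_assoc] using hzx (n + k))⟩

theorem branches_of_one_le (hβ : 1 < β) (hgold : β ^ 2 ≤ β + 1) {B : ℕ} {z : ℝ}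
    (h₁ : 1 ≤ β ^ (B + 1) * (β * z - 1)) (h₀ : 1 ≤ β ^ (B + 1) * ((β - 1)⁻¹ - β * z)) :
    Branches β (B + 1) z := by
  have hpow : 0 ≤ β ^ (B + 1) := by positivity
  have hz₁ : 0 < β * z - 1 := pos_of_mul_pos_right (by linarith) hpow
  have hz₀ : 0 < (β - 1)⁻¹ - β * z := pos_of_mul_pos_right (by linarith) hpow
  obtain ⟨a, haB, ha⟩ := exists_pow_mul_mem_switchRegion hβ hgold (by linarith) h₁
  obtain ⟨b, hbB, hb⟩ := exists_pow_mul_mem_switchRegion hβ hgold (by linarith) h₀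
  refine ⟨_, ha, _, inv_sub_mem_switchRegion hβ hb, fun n => ?_⟩
  have hzero : Nn β 2 n (β ^ a * (β * z - 1)) ≤ Nn β 2 (n + B) (β * z - 1) := by
    simpa [add_assoc, Nat.sub_add_cancel haB] using
      (Nn_le_Nn_add β 2 n (B - a) _).trans (Nn_pow_mul_le hβ (n + (B - a)) a (β * z - 1))
  have hone : Nn β 2 n ((β - 1)⁻¹ - β ^ b * ((β - 1)⁻¹ - β * z)) ≤ Nn β 2 (n + B) (β * z) := by
    simpa [add_assoc, Nat.sub_add_cancel hbB] using
      (Nn_le_Nn_add β 2 n (B - b) _).trans (Nn_sub_pow_mul_le hβ (n + (B - b)) b (β * z))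
  calc _ ≤ Nn β 2 (n + B) (β * z) + Nn β 2 (n + B) (β * z - 1) := by omega
    _ ≤ Nn β 2 (n + (B + 1)) z := Nn_mul_add_Nn_mul_sub_one_le hβ (n + B) z

theorem branches_of_mem_switchRegion (hβ : 1 < β) (hgold : β ^ 2 ≤ β + 1) {B : ℕ}
    (h₁ : 1 ≤ β ^ (B + 1) * (β - 1)) (h₂ : 2 ≤ β ^ (B + 1) * ((β - 1)⁻¹ - β)) {x : ℝ}
    (hx : x ∈ switchRegion β) : Branches β (B + 2) x := by
  obtain ⟨hxl, hxr⟩ := (mem_switchRegion hβ).1 hx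
  have hβ0 : 0 < β := zero_lt_one.trans hβ
  have hpow : 0 ≤ β ^ (B + 1) := by positivity
  have hβγ : β * (β - 1)⁻¹ = (β - 1)⁻¹ + 1 := by field_simp [(sub_pos.2 hβ).ne']; ring
  have hβx : 1 ≤ β * x := by simpa [hβ0.ne'] using mul_le_mul_of_nonneg_left hxl hβ0.le
  have hβx' : β * x ≤ (β - 1)⁻¹ := by
    have := mul_le_mul_of_nonneg_left hxr hβ0.le
    rw [mul_sub, hβγ, mul_inv_cancel₀ hβ0.ne'] at this
    linarith
  by_cases hl : 1 ≤ β ^ (B + 2) * (β * x - 1)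
  · by_cases hr : 1 ≤ β ^ (B + 2) * ((β - 1)⁻¹ - β * x)
    · exact branches_of_one_le hβ hgold hl hr
    · refine (branches_of_one_le hβ hgold (z := β * x - 1) ?_ ?_).of_le (Nn_mul_sub_one_le hβ · x)
      · have e : β ^ (B + 1) * (β * (β * x - 1) - 1)
            = β ^ (B + 1) * ((β - 1)⁻¹ - β) - β ^ (B + 2) * ((β - 1)⁻¹ - β * x) := by
          rw [pow_succ _ (B + 1)]
          linear_combination β ^ (B + 1) * hβγ
        linarith
      · calc 1 ≤ β ^ (B + 1) * (β - 1) := h₁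
          _ ≤ β ^ (B + 1) * ((β - 1)⁻¹ - β * (β * x - 1)) := by
            have := mul_le_mul_of_nonneg_left hβx' hβ0.le
            gcongr _ * ?_
            linarith
  · refine (branches_of_one_le hβ hgold (z := β * x) ?_ ?_).of_le (Nn_mul_le hβ · x)
    · calc 1 ≤ β ^ (B + 1) * (β - 1) := h₁
        _ ≤ β ^ (B + 1) * (β * (β * x) - 1) := by
          gcongr
          nlinarith
    · have e : β ^ (B + 1) * ((β - 1)⁻¹ - β * (β * x))
          = β ^ (B + 1) * ((β - 1)⁻¹ - β) - β ^ (B + 2) * (β * x - 1) := by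
        rw [pow_succ _ (B + 1)]
        ring
      linarith

theorem two_pow_le_Nn_mul (hβ : 1 < β) (hβ2 : β ≤ 2) {M : ℕ}
    (hbr : ∀ x ∈ switchRegion β, Branches β M x) (k : ℕ) {x : ℝ} (hx : x ∈ switchRegion β) :
    2 ^ k ≤ Nn β 2 (k * M) x := by
  induction k generalizing x with
  | zero =>
    obtain ⟨hxl, hxr⟩ := (mem_switchRegion hβ).1 hx
    have hβinv : 0 < β⁻¹ := inv_pos.2 (zero_lt_one.trans hβ)
    exact one_le_Nn_of_mem_Icc hβ hβ2 ⟨by linarith, by linarith⟩ _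
  | succ k ih =>
    obtain ⟨y₁, hy₁, y₂, hy₂, h⟩ := hbr x hx
    rw [pow_succ, mul_two, Nat.succ_mul]
    exact (add_le_add (ih hy₁) (ih hy₂)).trans (h _)

theorem two_rpow_le_Nn (hβ : 1 < β) (hβ2 : β ≤ 2) {M : ℕ} (hM : 0 < M)
    (hbr : ∀ x ∈ switchRegion β, Branches β M x) {x : ℝ} (hx : x ∈ switchRegion β) (n : ℕ) :
    (2 : ℝ) ^ ((n : ℝ) / M - 1) ≤ Nn β 2 n x := by
  have hdiv : (n : ℝ) / M - 1 ≤ (n / M : ℕ) := by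
    have hmod : ((n % M : ℕ) : ℝ) < M := by exact_mod_cast Nat.mod_lt n hM
    have hn : (n : ℝ) = M * (n / M : ℕ) + (n % M : ℕ) := by exact_mod_cast (Nat.div_add_mod n M).symm
    rw [sub_le_iff_le_add, div_le_iff₀ (by exact_mod_cast hM)]
    nlinarith
  calc (2 : ℝ) ^ ((n : ℝ) / M - 1) ≤ (2 : ℝ) ^ ((n / M : ℕ) : ℝ) :=
        Real.rpow_le_rpow_of_exponent_le one_le_two hdiv
    _ = (2 ^ (n / M) : ℕ) := by rw [Real.rpow_natCast]; push_cast; rfl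
    _ ≤ Nn β 2 (n / M * M) x := by exact_mod_cast two_pow_le_Nn_mul hβ hβ2 hbr (n / M) hx
    _ ≤ Nn β 2 n x := by
        exact_mod_cast (Nn_le_Nn_add β 2 (n / M * M) (n % M) x).trans_eq
          (by rw [Nat.div_add_mod'])

end SwitchRegion

section Kappa

variable {β : ℝ}

theorem exists_floor_logb_eq_natCast (hβ : 1 < β) {A : ℝ} (hA : 1 ≤ A) :
    ∃ L : ℕ, (⌊Real.logb β A⌋ : ℝ) = L ∧ A < β ^ (L + 1) := by
  obtain ⟨L, hL⟩ := Int.eq_ofNat_of_zero_le (Int.floor_nonneg.2 (Real.logb_nonneg hβ hA))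
  refine ⟨L, by rw [hL]; rfl, ?_⟩
  have h := Int.lt_floor_add_one (Real.logb β A)
  rw [hL, Int.cast_natCast, Real.logb_lt_iff_lt_rpow hβ (by linarith)] at h
  exact_mod_cast h

theorem pow_bounds_of_two_lt_sq (hβ : 2 < β ^ 2) (hgold : β ^ 2 < β + 1) {E : ℝ} (hE : β ≤ E)
    (hA : (β ^ 2 - 1) / (1 + β - β ^ 2) < E) :
    β ≤ E ^ 2 * (β - 1) ∧ 2 * β * (β - 1) ≤ E ^ 2 * (1 + β - β ^ 2) := by
  have hs : 0 < 1 + β - β ^ 2 := by linarith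
  have hβ1 : 1 < β := by nlinarith
  have hEs : β ^ 2 - 1 < E * (1 + β - β ^ 2) := (div_lt_iff₀ hs).1 hA
  have hEβ1 : 1 ≤ E * (β - 1) := by
    have : (1 + β - β ^ 2) * 1 ≤ (1 + β - β ^ 2) * (E * (β - 1)) := by nlinarith
    exact le_of_mul_le_mul_left this hs
  constructor
  · nlinarith
  · nlinarith

theorem pow_bounds_of_sq_le_two (hβ1 : 1 < β) (hβ : β ^ 2 ≤ 2) {E : ℝ} (hE : β ≤ E)
    (hA : 1 / (β - 1) < E) :
    β ≤ E ^ 2 * (β - 1) ∧ 2 * β * (β - 1) ≤ E ^ 2 * (1 + β - β ^ 2) := by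
  have hu : 0 < β - 1 := sub_pos.2 hβ1
  have hEu : 1 < E * (β - 1) := by rwa [div_lt_iff₀ hu] at hA
  have hs : 2 * β * (β - 1) ^ 3 ≤ 1 + β - β ^ 2 := by
    have hu' : β - 1 ≤ 4 / 9 := by nlinarith
    nlinarith [mul_pos hu hu, pow_pos hu 3, mul_le_mul_of_nonneg_left hu' (pow_pos hu 3).le,
      mul_le_mul_of_nonneg_left hu' (mul_pos hu hu).le, mul_le_mul_of_nonneg_left hu' hu.le]
  constructor
  · nlinarith
  · calc 2 * β * (β - 1) ≤ 2 * β * (β - 1) * (E * (β - 1)) ^ 2 := by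
          have : 1 ≤ (E * (β - 1)) ^ 2 := by nlinarith
          have : 0 ≤ 2 * β * (β - 1) := by positivity
          nlinarith
      _ = E ^ 2 * (2 * β * (β - 1) ^ 3) := by ring
      _ ≤ E ^ 2 * (1 + β - β ^ 2) := by gcongr

theorem exists_kappa_eq_of_floor_logb (hβ : 1 < β) {A : ℝ} (hA : 1 ≤ A)
    (hκ : kappa β = 1 / 2 * ((⌊Real.logb β A⌋ : ℝ) + 1)⁻¹)
    (hbounds : ∀ E, β ≤ E → A < E →
      β ≤ E ^ 2 * (β - 1) ∧ 2 * β * (β - 1) ≤ E ^ 2 * (1 + β - β ^ 2)) :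
    ∃ L : ℕ, kappa β = 1 / ((2 * L + 2 : ℕ) : ℝ) ∧
      1 ≤ β ^ (2 * L + 1) * (β - 1) ∧ 2 ≤ β ^ (2 * L + 1) * ((β - 1)⁻¹ - β) := by
  have hβ0 : 0 < β := zero_lt_one.trans hβ
  have hu : 0 < β - 1 := sub_pos.2 hβ
  obtain ⟨L, hL, hAL⟩ := exists_floor_logb_eq_natCast hβ hA
  obtain ⟨h₁, h₂⟩ := hbounds _ (le_self_pow₀ hβ.le (Nat.succ_ne_zero L)) hAL
  rw [show (β ^ (L + 1)) ^ 2 = β * β ^ (2 * L + 1) by ring] at h₁ h₂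
  refine ⟨L, by rw [hκ, hL]; push_cast; field_simp, ?_, ?_⟩
  · exact le_of_mul_le_mul_left (by linarith) hβ0
  · rw [show (β - 1)⁻¹ - β = (1 + β - β ^ 2) / (β - 1) by field_simp; ring, mul_div_assoc',
      le_div_iff₀ hu]
    exact le_of_mul_le_mul_left (by linarith) hβ0

theorem exists_kappa_eq (hβ : 1 < β) (hgold : β ^ 2 < β + 1) :
    ∃ L : ℕ, kappa β = 1 / ((2 * L + 2 : ℕ) : ℝ) ∧
      1 ≤ β ^ (2 * L + 1) * (β - 1) ∧ 2 ≤ β ^ (2 * L + 1) * ((β - 1)⁻¹ - β) := by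
  have hβ0 : 0 < β := zero_lt_one.trans hβ
  by_cases h : Real.sqrt 2 < β
  · have hsq : 2 < β ^ 2 := (Real.sqrt_lt' hβ0).1 h
    refine exists_kappa_eq_of_floor_logb hβ ?_ (by rw [kappa, if_pos h])
      fun E hE hA => pow_bounds_of_two_lt_sq hsq hgold hE hA
    rw [le_div_iff₀ (by linarith)]
    nlinarith
  · have hsq : β ^ 2 ≤ 2 := (Real.le_sqrt hβ0.le zero_le_two).1 (not_lt.1 h)
    refine exists_kappa_eq_of_floor_logb hβ ?_ (by rw [kappa, if_neg h])
      fun E hE hA => pow_bounds_of_sq_le_two hβ hsq hE hA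
    rw [le_div_iff₀ (sub_pos.2 hβ)]
    nlinarith

end Kappa

/-- for β ∈ (1,(1+√5)/2), κ = κ(β) > 0 and for every x in the switch
region [1/β, 1/(β(β-1))] and every n ≥ 1 one has 𝒩_n(x;β) ≥ 2^{κn−1}. -/
theorem switch_region_growth (β : ℝ) (hβ1 : 1 < β) (hβ2 : β < (1 + Real.sqrt 5) / 2) :
    0 < kappa β ∧
      ∀ x ∈ Icc (1 / β) (1 / (β * (β - 1))), ∀ n : ℕ, 1 ≤ n →
        (2 : ℝ) ^ (kappa β * (n : ℝ) - 1) ≤ (Nn β 2 n x : ℝ) := by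
  have hgold : β ^ 2 < β + 1 := by
    nlinarith [Real.sq_sqrt (show (0 : ℝ) ≤ 5 by norm_num), Real.sqrt_nonneg 5]
  have hβ2' : β ≤ 2 := by nlinarith
  obtain ⟨L, hκ, h₁, h₂⟩ := exists_kappa_eq hβ1 hgold
  refine ⟨by rw [hκ]; positivity, fun x hx n _ => ?_⟩
  rw [hκ, one_div_mul_eq_div]
  exact two_rpow_le_Nn hβ1 hβ2' (Nat.succ_pos _)
    (fun y hy => branches_of_mem_switchRegion hβ1 hgold.le h₁ h₂ hy) hx n
end

section
/- Let β ∈ (1, (1+√5)/2) and m = 2. For every x ∈ (0, 1/(β−1)) there exist an integer ℓ ≥ 0 and digits (δ₁,…,δ_ℓ) ∈ {0,1}^ℓ such that for each 1 ≤ j ≤ ℓ the partial value β^j·x − Σ_{i=1}^{j} δ_i β^{j−i} lies in [0, 1/(β−1)], and the final value β^ℓ·x − Σ_{i=1}^{ℓ} δ_i β^{ℓ−i} lies in the switch region [1/β, 1/(β(β−1))]. -/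
open MeasureTheory Filter Set

/-!
Let `R y = 1/(β-1) - y`. The digit-`1` map `y ↦ β y - 1` is conjugate under `R` to the digit-`0`
map `y ↦ β y`, and `R` maps both `I_β` and the switch region `[1/β, 1/(β(β-1))]` onto themselves.
Since `β(β-1) < 1` below the golden ratio, the switch region contains `(1/β, 1]`. A point of
`(0, 1]` is carried into `(1/β, 1]` by some power of `β`, without leaving `[0, 1] ⊆ I_β` on the
way; this handles `x ≤ 1` with the digits `0` and, after reflecting, `R x ≤ 1` with the digits `1`.
If `x > 1` and `R x > 1`, then `x` already lies in the switch region.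
-/

namespace BetaExpansion

variable {β : ℝ}

def betaInterval (β : ℝ) : Set ℝ := Icc 0 (1 / (β - 1))

def switchRegion (β : ℝ) : Set ℝ := Icc (1 / β) (1 / (β * (β - 1)))

theorem mul_sub_one_lt_one_of_lt_goldenRatio (hβ1 : 1 < β) (hβ2 : β < Real.goldenRatio) :
    β * (β - 1) < 1 := by
  nlinarith [Real.goldenRatio_sq]

theorem one_div_sub_one_sub_one_div (hβ1 : 1 < β) :
    1 / (β - 1) - 1 / β = 1 / (β * (β - 1)) := by
  have : β - 1 ≠ 0 := by linarith
  field_simp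
  ring

theorem one_le_one_div_mul_sub_one (hβ1 : 1 < β) (hgold : β * (β - 1) ≤ 1) :
    1 ≤ 1 / (β * (β - 1)) := by
  rw [le_div_iff₀ (by nlinarith)]
  linarith

theorem one_div_le_one_div_sub_one_sub_one (hβ1 : 1 < β) (hgold : β * (β - 1) ≤ 1) :
    1 / β ≤ 1 / (β - 1) - 1 := by
  linarith [one_div_sub_one_sub_one_div hβ1, one_le_one_div_mul_sub_one hβ1 hgold]

theorem Icc_zero_one_subset_betaInterval (hβ1 : 1 < β) (hgold : β * (β - 1) ≤ 1) :
    Icc 0 1 ⊆ betaInterval β := by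
  have : 1 ≤ 1 / (β - 1) := by
    linarith [one_div_le_one_div_sub_one_sub_one hβ1 hgold, one_div_pos.2 (by linarith : 0 < β)]
  exact Icc_subset_Icc le_rfl this

theorem Ioc_one_div_one_subset_switchRegion (hβ1 : 1 < β) (hgold : β * (β - 1) ≤ 1) :
    Ioc (1 / β) 1 ⊆ switchRegion β :=
  Ioc_subset_Icc_self.trans (Icc_subset_Icc le_rfl (one_le_one_div_mul_sub_one hβ1 hgold))

theorem sub_mem_betaInterval {y : ℝ} (hy : y ∈ betaInterval β) :
    1 / (β - 1) - y ∈ betaInterval β := by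
  rw [betaInterval, sub_mem_Icc_iff_right, sub_self, sub_zero]
  exact hy

theorem sub_mem_switchRegion (hβ1 : 1 < β) {y : ℝ} (hy : y ∈ switchRegion β) :
    1 / (β - 1) - y ∈ switchRegion β := by
  have hsymm := one_div_sub_one_sub_one_div hβ1
  rw [switchRegion, sub_mem_Icc_iff_right, hsymm, show 1 / (β - 1) - 1 / (β * (β - 1)) = 1 / β by
    linarith]
  exact hy

theorem pow_mul_sub_sum_zero (j : ℕ) (x : ℝ) :
    β ^ j * x - ∑ i ∈ Finset.range j, (((0 : Fin 2) : ℕ) : ℝ) * β ^ (j - 1 - i) = β ^ j * x := by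
  simp

theorem pow_mul_sub_sum_one (hβ : β ≠ 1) (j : ℕ) (x : ℝ) :
    β ^ j * x - ∑ i ∈ Finset.range j, (((1 : Fin 2) : ℕ) : ℝ) * β ^ (j - 1 - i) =
      1 / (β - 1) - β ^ j * (1 / (β - 1) - x) := by
  have hsum : ∑ i ∈ Finset.range j, (((1 : Fin 2) : ℕ) : ℝ) * β ^ (j - 1 - i) =
      (β ^ j - 1) / (β - 1) := by
    simp only [Fin.val_one, Nat.cast_one, one_mul]
    rw [Finset.sum_range_reflect (β ^ ·) j, geom_sum_eq hβ]
  have : β - 1 ≠ 0 := sub_ne_zero.2 hβ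
  rw [hsum]
  field_simp
  ring

theorem exists_pow_mul_mem_Ioc (hβ1 : 1 < β) {x : ℝ} (hx0 : 0 < x) (hx1 : x ≤ 1) :
    ∃ n : ℕ, β ^ n * x ∈ Ioc (1 / β) 1 := by
  obtain ⟨n, hle, hlt⟩ := exists_nat_pow_near (one_le_one_div hx0 hx1) hβ1
  refine ⟨n, ?_, ?_⟩
  · rw [div_lt_iff₀ (by linarith), mul_comm, ← mul_assoc, ← pow_succ']
    rwa [div_lt_iff₀ hx0] at hlt
  · rwa [le_div_iff₀ hx0] at hle

theorem exists_pow_mul_mem_switchRegion (hβ1 : 1 < β) (hgold : β * (β - 1) ≤ 1) {y : ℝ}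
    (hy0 : 0 < y) (hy1 : y ≤ 1) :
    ∃ ℓ : ℕ, (∀ j ≤ ℓ, β ^ j * y ∈ betaInterval β) ∧ β ^ ℓ * y ∈ switchRegion β := by
  obtain ⟨ℓ, hℓ⟩ := exists_pow_mul_mem_Ioc hβ1 hy0 hy1
  refine ⟨ℓ, fun j hj => Icc_zero_one_subset_betaInterval hβ1 hgold ⟨by positivity, ?_⟩,
    Ioc_one_div_one_subset_switchRegion hβ1 hgold hℓ⟩
  calc β ^ j * y ≤ β ^ ℓ * y := by gcongr; linarith
    _ ≤ 1 := hℓ.2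

end BetaExpansion

open BetaExpansion in
/-- for β ∈ (1,(1+√5)/2), every x ∈ (0,1/(β-1)) reaches the switch region
[1/β, 1/(β(β-1))] after finitely many digit-shift steps, with all intermediate values
staying in I_β = [0,1/(β-1)]. (Here `δ i` is the digit δ_{i+1}.) -/
theorem reach_switch_region (β : ℝ) (hβ1 : 1 < β) (hβ2 : β < (1 + Real.sqrt 5) / 2) :
    ∀ x ∈ Ioo (0 : ℝ) (1 / (β - 1)),
      ∃ (ℓ : ℕ) (δ : ℕ → Fin 2),
        (∀ j : ℕ, 1 ≤ j → j ≤ ℓ →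
          β ^ j * x - ∑ i ∈ Finset.range j, ((δ i : ℕ) : ℝ) * β ^ (j - 1 - i) ∈
            Icc (0 : ℝ) (1 / (β - 1))) ∧
        β ^ ℓ * x - ∑ i ∈ Finset.range ℓ, ((δ i : ℕ) : ℝ) * β ^ (ℓ - 1 - i) ∈
          Icc (1 / β) (1 / (β * (β - 1))) := by
  rintro x ⟨hx0, hxI⟩
  have hgold := (mul_sub_one_lt_one_of_lt_goldenRatio hβ1 hβ2).le
  rcases le_or_gt x 1 with hx1 | hx1
  · obtain ⟨ℓ, hI, hS⟩ := exists_pow_mul_mem_switchRegion hβ1 hgold hx0 hx1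
    refine ⟨ℓ, fun _ => 0, fun j _ hj => ?_, ?_⟩ <;> rw [pow_mul_sub_sum_zero]
    exacts [hI j hj, hS]
  rcases le_or_gt (1 / (β - 1) - x) 1 with hy1 | hy1
  · obtain ⟨ℓ, hI, hS⟩ := exists_pow_mul_mem_switchRegion hβ1 hgold (sub_pos.2 hxI) hy1
    refine ⟨ℓ, fun _ => 1, fun j _ hj => ?_, ?_⟩ <;> rw [pow_mul_sub_sum_one hβ1.ne']
    exacts [sub_mem_betaInterval (hI j hj), sub_mem_switchRegion hβ1 hS]
  · refine ⟨0, fun _ => 0, fun j hj1 hj0 => by omega, ?_⟩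
    have hinv : 1 / β ≤ 1 := (div_le_one₀ (by linarith)).2 hβ1.le
    rw [pow_mul_sub_sum_zero, pow_zero, one_mul]
    constructor <;> linarith [one_div_sub_one_sub_one_div hβ1]
end
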